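/- For every integer k > 2, the graph G(Z*_{2^k}) satisfies (2^k−1)/(2^{k−1}+1) ≤ ldim_f(G(Z*_{2^k})) ≤ (2^k−1)/2. -/

import Mathlib

open Finset

/-- A local resolving function of a graph `G`: a map `ζ : V → [0,1]` such that for every
pair of adjacent vertices `u v`, the sum of `ζ` over the local resolving neighborhood
`R{u,v} = {w : d(w,u) ≠ d(w,v)}` is at least `1`. -/
def IsLocalResolvingFunction {V : Type*} [Fintype V] (G : SimpleGraph V) (ζ : V → ℝ) : Prop :=
  (∀ w, ζ w ∈ Set.Icc (0 : ℝ) 1) ∧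
    ∀ u v, G.Adj u v →
      1 ≤ ∑ w ∈ Finset.univ.filter (fun w => G.dist w u ≠ G.dist w v), ζ w

/-- The local fractional metric dimension of `G`: the minimum of `∑ v, ζ v` over all
local resolving functions `ζ` of `G`. -/
noncomputable def ldimf {V : Type*} [Fintype V] (G : SimpleGraph V) : ℝ :=
  sInf {s : ℝ | ∃ ζ : V → ℝ, IsLocalResolvingFunction G ζ ∧ s = ∑ v, ζ v}

/-- The graph `G(Z*_n)`: vertices are the nonzero residues `1, …, n-1` of `Z_n`,
two distinct vertices `x, y` being adjacent iff `x·y mod n` is not a unit of `Z_n`,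
i.e. `gcd(x·y, n) > 1`. -/
def zStarGraph (n : ℕ) : SimpleGraph {x : Fin n // x.val ≠ 0} where
  Adj x y := x ≠ y ∧ 1 < Nat.gcd (x.1.val * y.1.val) n
  symm := ⟨fun x y ⟨h1, h2⟩ => ⟨h1.symm, by rwa [Nat.mul_comm]⟩⟩
  loopless := ⟨fun x ⟨h, _⟩ => h rfl⟩

/-!
The constant function `1/2` resolves every edge, since `u` and `v` themselves lie in `R{u,v}`;
this gives the upper bound `|V|/2`. For the lower bound, every even residue is adjacent to all
other vertices, so two even vertices `u, v` are resolved only by themselves and any local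
resolving function has `ζ u + ζ v ≥ 1`. Summing over pairs, the `2^(k-1) - 1` even vertices
carry weight at least `(2^(k-1) - 1)/2`, which exceeds `(2^k - 1)/(2^(k-1) + 1)` once `k ≥ 3`.
-/

theorem Finset.card_div_two_le_sum_of_one_le_add {α : Type*} [DecidableEq α] {s : Finset α}
    {f : α → ℝ} (hs : 1 < #s) (h : ∀ u ∈ s, ∀ v ∈ s, u ≠ v → 1 ≤ f u + f v) :
    (#s : ℝ) / 2 ≤ ∑ u ∈ s, f u := by
  have hrow : ∀ u ∈ s, (#s : ℝ) - 1 ≤ (#s - 2) * f u + ∑ v ∈ s, f v := by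
    intro u hu
    calc (#s : ℝ) - 1 = ∑ v ∈ s.erase u, (1 : ℝ) := by
          simp [Finset.card_erase_of_mem hu, Nat.cast_sub (card_pos.2 ⟨u, hu⟩)]
      _ ≤ ∑ v ∈ s.erase u, (f u + f v) :=
          sum_le_sum fun v hv => h u hu v (mem_of_mem_erase hv) (ne_of_mem_erase hv).symm
      _ = _ := by
          rw [sum_add_distrib, sum_const, card_erase_of_mem hu, nsmul_eq_mul,
            sum_erase_eq_sub hu, Nat.cast_sub (card_pos.2 ⟨u, hu⟩)]
          ring
  have hsum := sum_le_sum hrow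
  simp only [sum_const, nsmul_eq_mul, sum_add_distrib, ← mul_sum] at hsum
  have : (1 : ℝ) < #s := by exact_mod_cast hs
  nlinarith

section LocalResolving

variable {V : Type*} [Fintype V] {G : SimpleGraph V} {ζ : V → ℝ}

theorem IsLocalResolvingFunction.nonneg (hζ : IsLocalResolvingFunction G ζ) (w : V) :
    0 ≤ ζ w :=
  (hζ.1 w).1

theorem isLocalResolvingFunction_const_half (G : SimpleGraph V) :
    IsLocalResolvingFunction G fun _ => 1 / 2 := by
  classical
  refine ⟨fun _ => ⟨by norm_num, by norm_num⟩, fun u v huv => ?_⟩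
  have hpair : {u, v} ⊆ univ.filter fun w => G.dist w u ≠ G.dist w v := by
    simp [insert_subset_iff, SimpleGraph.dist_comm, SimpleGraph.dist_eq_one_iff_adj.2 huv]
  have hcard := card_le_card hpair
  rw [card_pair huv.ne] at hcard
  rw [sum_const, nsmul_eq_mul]
  have : (2 : ℝ) ≤ _ := Nat.ofNat_le_cast.2 hcard
  linarith

theorem ldimf_le_sum (hζ : IsLocalResolvingFunction G ζ) : ldimf G ≤ ∑ v, ζ v :=
  csInf_le ⟨0, by rintro _ ⟨ζ, hζ, rfl⟩; exact sum_nonneg fun w _ => hζ.nonneg w⟩ ⟨ζ, hζ, rfl⟩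

theorem le_ldimf {c : ℝ} (h : ∀ ζ, IsLocalResolvingFunction G ζ → c ≤ ∑ v, ζ v) :
    c ≤ ldimf G :=
  le_csInf ⟨_, _, isLocalResolvingFunction_const_half G, rfl⟩ <| by
    rintro _ ⟨ζ, hζ, rfl⟩
    exact h ζ hζ

theorem ldimf_le_card_div_two (G : SimpleGraph V) : ldimf G ≤ Fintype.card V / 2 := by
  simpa [div_eq_mul_inv] using ldimf_le_sum (isLocalResolvingFunction_const_half G)

theorem IsLocalResolvingFunction.one_le_add_of_forall_adj (hζ : IsLocalResolvingFunction G ζ)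
    {u v : V} (huv : u ≠ v) (hu : ∀ w, w ≠ u → G.Adj u w) (hv : ∀ w, w ≠ v → G.Adj v w) :
    1 ≤ ζ u + ζ v := by
  classical
  have hsub : (univ.filter fun w => G.dist w u ≠ G.dist w v) ⊆ {u, v} := by
    intro w hw
    by_contra hw'
    simp only [mem_insert, mem_singleton, not_or] at hw'
    simp only [mem_filter, mem_univ, true_and] at hw
    rw [SimpleGraph.dist_eq_one_iff_adj.2 (hu w hw'.1).symm,
      SimpleGraph.dist_eq_one_iff_adj.2 (hv w hw'.2).symm] at hw
    exact hw rfl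
  calc 1 ≤ _ := hζ.2 u v (hu v huv.symm)
    _ ≤ ∑ w ∈ {u, v}, ζ w := sum_le_sum_of_subset_of_nonneg hsub fun w _ _ => hζ.nonneg w
    _ = ζ u + ζ v := sum_pair huv

end LocalResolving

section zStarGraph

variable {n : ℕ}

theorem zStarGraph_adj_of_two_dvd (hn : 2 ∣ n) {x y : {x : Fin n // x.val ≠ 0}} (hxy : x ≠ y)
    (hx : 2 ∣ x.1.val) : (zStarGraph n).Adj x y := by
  refine ⟨hxy, ?_⟩
  have h2 : 2 ∣ Nat.gcd (x.1.val * y.1.val) n := Nat.dvd_gcd (hx.mul_right _) hn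
  have hpos : 0 < Nat.gcd (x.1.val * y.1.val) n := Nat.gcd_pos_of_pos_right _ (by omega)
  omega

theorem card_filter_zStarGraph_vertices (n : ℕ) (p : ℕ → Prop) [DecidablePred p] :
    #{x : {x : Fin n // x.val ≠ 0} | p x.1.val} = #{k ∈ Ioc 0 (n - 1) | p k} := by
  apply card_nbij (fun x => x.1.val)
  · intro x hx
    simp only [coe_filter, mem_univ, true_and, Set.mem_ofPred_eq, mem_Ioc] at hx ⊢
    exact ⟨⟨Nat.pos_of_ne_zero x.2, by have := x.1.isLt; omega⟩, hx⟩
  · intro x _ y _ h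
    exact Subtype.ext (Fin.ext h)
  · intro k hk
    simp only [coe_filter, mem_Ioc, Set.mem_ofPred_eq] at hk
    exact ⟨⟨⟨k, by omega⟩, by simp only; omega⟩, by simpa using hk.2, rfl⟩

theorem card_zStarGraph_vertices (n : ℕ) : Fintype.card {x : Fin n // x.val ≠ 0} = n - 1 := by
  simpa using card_filter_zStarGraph_vertices n fun _ => True

theorem card_filter_two_dvd_zStarGraph_vertices (n : ℕ) :
    #{x : {x : Fin n // x.val ≠ 0} | 2 ∣ x.1.val} = (n - 1) / 2 := by
  rw [card_filter_zStarGraph_vertices, Nat.Ioc_filter_dvd_card_eq_div]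

theorem ldimf_zStarGraph_le (n : ℕ) : ldimf (zStarGraph n) ≤ ((n - 1 : ℕ) : ℝ) / 2 := by
  simpa only [card_zStarGraph_vertices] using ldimf_le_card_div_two (zStarGraph n)

theorem le_ldimf_zStarGraph (hn : 2 ∣ n) (h6 : 6 ≤ n) :
    (((n - 1) / 2 : ℕ) : ℝ) / 2 ≤ ldimf (zStarGraph n) := by
  refine le_ldimf fun ζ hζ => ?_
  set S := ({x | 2 ∣ x.1.val} : Finset {x : Fin n // x.val ≠ 0})
  have hS : #S = (n - 1) / 2 := card_filter_two_dvd_zStarGraph_vertices n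
  have huniv : ∀ u ∈ S, ∀ w, w ≠ u → (zStarGraph n).Adj u w := fun u hu w hw =>
    zStarGraph_adj_of_two_dvd hn hw.symm (mem_filter.1 hu).2
  calc (((n - 1) / 2 : ℕ) : ℝ) / 2 = (#S : ℝ) / 2 := by rw [hS]
    _ ≤ ∑ u ∈ S, ζ u := card_div_two_le_sum_of_one_le_add (by omega) fun u hu v hv huv =>
        hζ.one_le_add_of_forall_adj huv (huniv u hu) (huniv v hv)
    _ ≤ ∑ u, ζ u := sum_le_univ_sum_of_nonneg hζ.nonneg

end zStarGraph

/-- For every integer `k > 2`,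
`(2^k-1)/(2^(k-1)+1) ≤ ldimf(G(Z*_{2^k})) ≤ (2^k-1)/2`. -/
theorem ldimf_zStarGraph_two_pow (k : ℕ) (hk : 2 < k) :
    ((2 : ℝ) ^ k - 1) / ((2 : ℝ) ^ (k - 1) + 1) ≤ ldimf (zStarGraph (2 ^ k)) ∧
      ldimf (zStarGraph (2 ^ k)) ≤ ((2 : ℝ) ^ k - 1) / 2 := by
  obtain ⟨x, hx, hkx⟩ : ∃ x : ℕ, 2 ^ (k - 1) = x ∧ 2 ^ k = 2 * x :=
    ⟨_, rfl, by rw [← pow_succ']; congr 1; omega⟩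
  have hx4 : 4 ≤ x := hx ▸ (Nat.pow_le_pow_right two_pos (by omega : 2 ≤ k - 1))
  have hkx' : (2 : ℝ) ^ k = 2 * x := by exact_mod_cast hkx
  have hx' : (2 : ℝ) ^ (k - 1) = x := by exact_mod_cast hx
  refine ⟨?_, (ldimf_zStarGraph_le _).trans_eq ?_⟩
  · calc ((2 : ℝ) ^ k - 1) / ((2 : ℝ) ^ (k - 1) + 1) ≤ (((2 ^ k - 1) / 2 : ℕ) : ℝ) / 2 := by
          rw [hkx', hx', hkx, show (2 * x - 1) / 2 = x - 1 by omega, Nat.cast_sub (by omega),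
            Nat.cast_one, div_le_div_iff₀ (by positivity) two_pos]
          have : (4 : ℝ) ≤ x := by exact_mod_cast hx4
          nlinarith
      _ ≤ _ := le_ldimf_zStarGraph (hkx ▸ dvd_mul_right 2 x) (by omega)
  · rw [Nat.cast_sub Nat.one_le_two_pow]
    push_cast
    rfl
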